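/- arXiv:2301.05879 — 4 statements merged into one kernel-verified Lean document; each statement's English description precedes it below -/
import Mathlib

section
/- The operation ((s,x,y,b,r),(s',x',y',b',r')) ↦ (s + s' + x r^{-1} y' - ½ b (r^{-1} y')², x + r x' - b r^{-1} y', y + r^{-1} y', b + b' r², r r') defines a group structure on the set R^3 × R × R_{>0}, with identity (0,0,0,0,1). -/
/-- The underlying set of the SSR group: (s,x,y,b,r) with r > 0. -/
def SSR : Type := ℝ × ℝ × ℝ × ℝ × {r : ℝ // 0 < r}

/-- The SSR group multiplication. -/
noncomputable def ssrMul (g g' : SSR) : SSR :=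
  ⟨g.1 + g'.1 + g.2.1 * ((g.2.2.2.2 : ℝ)⁻¹ * g'.2.2.1)
      - g.2.2.2.1 * ((g.2.2.2.2 : ℝ)⁻¹ * g'.2.2.1) ^ 2 / 2,
   g.2.1 + (g.2.2.2.2 : ℝ) * g'.2.1 - g.2.2.2.1 * ((g.2.2.2.2 : ℝ)⁻¹ * g'.2.2.1),
   g.2.2.1 + (g.2.2.2.2 : ℝ)⁻¹ * g'.2.2.1,
   g.2.2.2.1 + g'.2.2.2.1 * (g.2.2.2.2 : ℝ) ^ 2,
   ⟨(g.2.2.2.2 : ℝ) * (g'.2.2.2.2 : ℝ), mul_pos g.2.2.2.2.2 g'.2.2.2.2.2⟩⟩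

/-- The identity element of the SSR group. -/
noncomputable def ssrOne : SSR := ⟨0, 0, 0, 0, ⟨1, one_pos⟩⟩

lemma SSR.ext' {g h : SSR} (h1 : g.1 = h.1) (h2 : g.2.1 = h.2.1)
    (h3 : g.2.2.1 = h.2.2.1) (h4 : g.2.2.2.1 = h.2.2.2.1)
    (h5 : (g.2.2.2.2 : ℝ) = (h.2.2.2.2 : ℝ)) : g = h := by
  exact Prod.ext h1 (Prod.ext h2 (Prod.ext h3 (Prod.ext h4 (Subtype.ext h5))))

/-- The SSR multiplication defines a group structure with identity (0,0,0,0,1). -/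
theorem ssr_group_structure :
    (∀ g : SSR, ssrMul ssrOne g = g ∧ ssrMul g ssrOne = g) ∧
    (∀ g h k : SSR, ssrMul (ssrMul g h) k = ssrMul g (ssrMul h k)) ∧
    (∀ g : SSR, ∃ h : SSR, ssrMul g h = ssrOne ∧ ssrMul h g = ssrOne) := by
  refine ⟨?_, ?_, ?_⟩
  · rintro ⟨s, x, y, b, r, hr⟩
    have hr' : r ≠ 0 := ne_of_gt hr
    constructor <;>
      refine SSR.ext' ?_ ?_ ?_ ?_ ?_ <;>
      simp only [ssrMul, ssrOne] <;>
      first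
        | (field_simp; ring)
        | field_simp
        | ring
  · rintro ⟨s, x, y, b, r, hr⟩ ⟨s', x', y', b', r', hr'⟩ ⟨s'', x'', y'', b'', r'', hr''⟩
    have h1 : r ≠ 0 := ne_of_gt hr
    have h2 : r' ≠ 0 := ne_of_gt hr'
    refine SSR.ext' ?_ ?_ ?_ ?_ ?_ <;>
      simp only [ssrMul] <;>
      first
        | (field_simp; ring)
        | field_simp
        | ring
  · rintro ⟨s, x, y, b, r, hr⟩
    have h1 : r ≠ 0 := ne_of_gt hr
    refine ⟨⟨-s + x * y + b * y ^ 2 / 2, (-x - b * y) / r, -r * y, -b / r ^ 2,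
      ⟨r⁻¹, inv_pos.mpr hr⟩⟩, ?_, ?_⟩ <;>
      refine SSR.ext' ?_ ?_ ?_ ?_ ?_ <;>
      simp only [ssrMul, ssrOne] <;>
      first
        | (field_simp; ring)
        | field_simp
        | ring
end

section
/- The map sending (s,x,y,b,r) to the 4×4 matrix [[1, -yr, (x+by)/r, 2s-yx],[0, r, -b/r, x],[0, 0, 1/r, y],[0, 0, 0, 1]] is an injective group homomorphism from the SSR group G into GL(4,R). -/
/-- The 4×4 matrix realisation of an SSR group element. -/
noncomputable def ssrMat (g : SSR) : Matrix (Fin 4) (Fin 4) ℝ :=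
  !![1, -g.2.2.1 * (g.2.2.2.2 : ℝ), (g.2.1 + g.2.2.2.1 * g.2.2.1) / (g.2.2.2.2 : ℝ),
        2 * g.1 - g.2.2.1 * g.2.1;
     0, (g.2.2.2.2 : ℝ), -g.2.2.2.1 / (g.2.2.2.2 : ℝ), g.2.1;
     0, 0, (g.2.2.2.2 : ℝ)⁻¹, g.2.2.1;
     0, 0, 0, 1]

theorem ssrMat_isUpperTriangular (g : SSR) : (ssrMat g).IsUpperTriangular := by
  intro i j hij
  fin_cases i <;> fin_cases j <;> first | rfl | simp at hij

theorem det_ssrMat (g : SSR) : (ssrMat g).det = 1 := by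
  rw [Matrix.det_of_isUpperTriangular (ssrMat_isUpperTriangular g), Fin.prod_univ_four]
  simp [ssrMat, g.2.2.2.2.2.ne']

theorem isUnit_ssrMat (g : SSR) : IsUnit (ssrMat g) := by
  rw [Matrix.isUnit_iff_isUnit_det, det_ssrMat]
  exact isUnit_one

theorem ssrMat_ssrMul (g h : SSR) : ssrMat (ssrMul g h) = ssrMat g * ssrMat h := by
  obtain ⟨s, x, y, b, r, hpos⟩ := g
  have hr : r ≠ 0 := hpos.ne'
  ext i j
  fin_cases i <;> fin_cases j <;>
    simp [ssrMat, ssrMul, Matrix.mul_apply, Fin.sum_univ_four] <;> field_simp <;> ring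

theorem ssrMat_injective : Function.Injective ssrMat := by
  rintro ⟨s, x, y, b, r, hpos⟩ ⟨s', x', y', b', r', _⟩ h
  have hr : r = r' := congrFun (congrFun h 1) 1
  have hx : x = x' := congrFun (congrFun h 1) 3
  have hy : y = y' := congrFun (congrFun h 2) 3
  have hb : -b / r = -b' / r' := congrFun (congrFun h 1) 2
  have hs : 2 * s - y * x = 2 * s' - y' * x' := congrFun (congrFun h 0) 3
  subst hr hx hy
  obtain rfl : b = b' := by simpa [div_left_inj' hpos.ne'] using hb
  obtain rfl : s = s' := by linarith
  rfl

/-- The matrix realisation is an injective homomorphism from the SSR group into GL(4,ℝ). -/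
theorem ssr_matrix_realisation :
    Function.Injective ssrMat ∧
    (∀ g : SSR, IsUnit (ssrMat g)) ∧
    (∀ g h : SSR, ssrMat (ssrMul g h) = ssrMat g * ssrMat h) :=
  ⟨ssrMat_injective, isUnit_ssrMat, ssrMat_ssrMul⟩
end

section
/- For fixed ℏ ∈ R, the formula [ρ(s,x,y,b,r)f](u) = √r · e^{2πiℏ(s + x(u-y) - b(u-y)²/2)} · f(r(u-y)) defines a unitary representation of the SSR group G on L²(R): each ρ(g) is unitary and ρ(g₁g₂) = ρ(g₁)ρ(g₂). -/
open Real MeasureTheory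

/-- The Schrödinger type representation of the SSR group:
[ρ(s,x,y,b,r)f](u) = √r e^{2πiℏ(s + x(u-y) - b(u-y)²/2)} f(r(u-y)). -/
noncomputable def ssrRho (h : ℝ) (g : SSR) (f : ℝ → ℂ) : ℝ → ℂ := fun u =>
  (Real.sqrt (g.2.2.2.2 : ℝ) : ℂ) *
    Complex.exp (2 * (π : ℂ) * Complex.I * (h : ℂ) *
      ((g.1 : ℂ) + (g.2.1 : ℂ) * ((u : ℂ) - (g.2.2.1 : ℂ))
        - (g.2.2.2.1 : ℂ) * ((u : ℂ) - (g.2.2.1 : ℂ)) ^ 2 / 2)) *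
    f ((g.2.2.2.2 : ℝ) * (u - g.2.2.1))

namespace SSR

abbrev s (g : SSR) : ℝ := g.1
abbrev x (g : SSR) : ℝ := g.2.1
abbrev y (g : SSR) : ℝ := g.2.2.1
abbrev b (g : SSR) : ℝ := g.2.2.2.1
abbrev r (g : SSR) : ℝ := g.2.2.2.2

lemma r_pos (g : SSR) : 0 < g.r := g.2.2.2.2.2

noncomputable def phase (g : SSR) (u : ℝ) : ℝ := g.s + g.x * (u - g.y) - g.b * (u - g.y) ^ 2 / 2

lemma r_mul (g₁ g₂ : SSR) : (ssrMul g₁ g₂).r = g₁.r * g₂.r := rfl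

lemma y_mul (g₁ g₂ : SSR) : (ssrMul g₁ g₂).y = g₁.y + g₁.r⁻¹ * g₂.y := rfl

lemma phase_mul (g₁ g₂ : SSR) (u : ℝ) :
    (ssrMul g₁ g₂).phase u = g₁.phase u + g₂.phase (g₁.r * (u - g₁.y)) := by
  have hr₁ := g₁.r_pos.ne'
  simp only [phase, ssrMul]
  field_simp
  ring

lemma r_mul_sub_y_mul (g₁ g₂ : SSR) (u : ℝ) :
    (ssrMul g₁ g₂).r * (u - (ssrMul g₁ g₂).y) = g₂.r * (g₁.r * (u - g₁.y) - g₂.y) := by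
  have hr₁ := g₁.r_pos.ne'
  rw [r_mul, y_mul]
  field_simp
  ring

end SSR

section AffineChange

variable {E : Type*} [NormedAddCommGroup E] {r : ℝ}

lemma measurableEmbedding_mul_sub (hr : r ≠ 0) (y : ℝ) :
    MeasurableEmbedding fun u : ℝ => r * (u - y) := by
  convert ((Homeomorph.addRight (-y)).trans (Homeomorph.mulLeft₀ r hr)).measurableEmbedding using 1
  ext u
  simp [sub_eq_add_neg]

lemma map_volume_mul_sub (hr : r ≠ 0) (y : ℝ) :
    Measure.map (fun u : ℝ => r * (u - y)) volume = ENNReal.ofReal |r⁻¹| • volume := by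
  have : (fun u : ℝ => r * (u - y)) = (r * ·) ∘ (· - y) := rfl
  rw [this, ← Measure.map_map (measurable_const_mul r) (measurable_sub_const y),
    map_sub_right_eq_self, Real.map_volume_mul_left hr]

lemma eLpNorm_comp_mul_sub (hr : r ≠ 0) (y : ℝ) (f : ℝ → E) {p : ENNReal} (hp : p ≠ ⊤) :
    eLpNorm (fun u => f (r * (u - y))) p volume
      = ENNReal.ofReal |r⁻¹| ^ (1 / p).toReal * eLpNorm f p volume := by
  rw [← Function.comp_def, ← (measurableEmbedding_mul_sub hr y).eLpNorm_map_measure,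
    map_volume_mul_sub hr, eLpNorm_smul_measure_of_ne_top hp, smul_eq_mul]

lemma MeasureTheory.MemLp.comp_mul_sub {f : ℝ → E} {p : ENNReal} (hf : MemLp f p volume)
    (hr : r ≠ 0) (y : ℝ) :
    MemLp (fun u => f (r * (u - y))) p volume := by
  refine MemLp.comp_of_map ?_ (measurableEmbedding_mul_sub hr y).measurable.aemeasurable
  rw [map_volume_mul_sub hr]
  exact hf.smul_measure ENNReal.ofReal_ne_top

end AffineChange

lemma ssrRho_apply (h : ℝ) (g : SSR) (f : ℝ → ℂ) (u : ℝ) :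
    ssrRho h g f u
      = (√g.r : ℂ) * Complex.exp ((2 * π * h * g.phase u : ℝ) * Complex.I)
          * f (g.r * (u - g.y)) := by
  simp only [ssrRho, SSR.phase]
  push_cast
  congr 3
  ring

lemma norm_ssrRho_apply (h : ℝ) (g : SSR) (f : ℝ → ℂ) (u : ℝ) :
    ‖ssrRho h g f u‖ = ‖(√g.r : ℂ) * f (g.r * (u - g.y))‖ := by
  rw [ssrRho_apply, norm_mul, norm_mul, Complex.norm_exp_ofReal_mul_I, mul_one, norm_mul]

lemma eLpNorm_ssrRho (h : ℝ) (g : SSR) (f : ℝ → ℂ) :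
    eLpNorm (ssrRho h g f) 2 volume = eLpNorm f 2 volume := by
  have hr := g.r_pos
  have hscale : ENNReal.ofReal √g.r * ENNReal.ofReal |g.r⁻¹| ^ (1 / 2 : ENNReal).toReal = 1 := by
    rw [abs_of_pos (inv_pos.2 hr), ENNReal.ofReal_rpow_of_nonneg (by positivity) (by positivity),
      ← ENNReal.ofReal_mul (by positivity), ENNReal.toReal_div, Real.inv_rpow hr.le,
      Real.sqrt_eq_rpow]
    norm_num [mul_inv_cancel₀ (Real.rpow_pos_of_pos hr _).ne']
  calc eLpNorm (ssrRho h g f) 2 volume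
      = eLpNorm ((√g.r : ℂ) • fun u => f (g.r * (u - g.y))) 2 volume :=
        eLpNorm_congr_norm_ae (.of_forall (norm_ssrRho_apply h g f))
    _ = eLpNorm f 2 volume := by
        rw [eLpNorm_const_smul, eLpNorm_comp_mul_sub hr.ne' _ _ ENNReal.ofNat_ne_top, ← mul_assoc,
          ← ofReal_norm, Complex.norm_real, Real.norm_of_nonneg (Real.sqrt_nonneg _), hscale, one_mul]

lemma MeasureTheory.MemLp.ssrRho {f : ℝ → ℂ} (hf : MemLp f 2 volume) (h : ℝ) (g : SSR) :
    MemLp (ssrRho h g f) 2 volume := by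
  have hcomp := hf.comp_mul_sub g.r_pos.ne' g.y
  refine (hcomp.const_mul (√g.r : ℂ)).congr_norm ?_
    (.of_forall fun u => (norm_ssrRho_apply h g f u).symm)
  rw [funext (ssrRho_apply h g f)]
  exact (Continuous.aestronglyMeasurable (by unfold SSR.phase; fun_prop)).mul
    hcomp.aestronglyMeasurable

lemma ssrRho_one (h : ℝ) (f : ℝ → ℂ) : ssrRho h ssrOne f = f := by
  funext u
  simp [ssrRho, ssrOne]

lemma ssrRho_mul (h : ℝ) (g₁ g₂ : SSR) (f : ℝ → ℂ) :
    ssrRho h (ssrMul g₁ g₂) f = ssrRho h g₁ (ssrRho h g₂ f) := by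
  funext u
  rw [ssrRho_apply, SSR.r_mul_sub_y_mul, SSR.phase_mul, SSR.r_mul, Real.sqrt_mul g₁.r_pos.le]
  simp only [ssrRho_apply]
  push_cast
  rw [mul_add, add_mul, Complex.exp_add]
  ring

/-- The formula ρ defines a unitary representation of the SSR group on L²(ℝ):
each ρ(g) is an invertible isometry of L² and ρ(g₁g₂) = ρ(g₁)ρ(g₂). -/
theorem ssr_rho_unitary_representation (h : ℝ) :
    (∀ (g : SSR) (f : ℝ → ℂ), eLpNorm (ssrRho h g f) 2 volume = eLpNorm f 2 volume) ∧
    (∀ (g : SSR) (f : ℝ → ℂ), MemLp f 2 volume → MemLp (ssrRho h g f) 2 volume) ∧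
    (∀ f : ℝ → ℂ, ssrRho h ssrOne f = f) ∧
    (∀ (g₁ g₂ : SSR) (f : ℝ → ℂ), ssrRho h (ssrMul g₁ g₂) f = ssrRho h g₁ (ssrRho h g₂ f)) :=
  ⟨eLpNorm_ssrRho h, fun g _ hf => hf.ssrRho h g, ssrRho_one h, ssrRho_mul h⟩
end

section
/- The center of the SSR group G equals Z = {(s,0,0,0,1) : s ∈ R}. -/
namespace SSR

noncomputable def bUnit : SSR := ⟨0, 0, 0, 1, ⟨1, one_pos⟩⟩

noncomputable def yUnit : SSR := ⟨0, 0, 1, 0, ⟨1, one_pos⟩⟩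

theorem r_eq_one_and_y_eq_zero_of_commute_bUnit {g : SSR} (h : ssrMul g bUnit = ssrMul bUnit g) :
    (g.2.2.2.2 : ℝ) = 1 ∧ g.2.2.1 = 0 := by
  obtain ⟨s, x, y, b, r, hr⟩ := g
  have hb := congrArg (fun g : SSR => g.2.2.2.1) h
  have hx := congrArg (fun g : SSR => g.2.1) h
  simp only [ssrMul, bUnit] at hb hx
  have hr1 : r = 1 := by nlinarith
  subst hr1
  exact ⟨rfl, by linarith⟩

theorem b_eq_zero_and_x_eq_zero_of_commute_yUnit {g : SSR} (h : ssrMul g yUnit = ssrMul yUnit g) :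
    g.2.2.2.1 = 0 ∧ g.2.1 = 0 := by
  obtain ⟨s, x, y, b, r, hr⟩ := g
  have hs := congrArg (fun g : SSR => g.1) h
  have hx := congrArg (fun g : SSR => g.2.1) h
  simp only [ssrMul, yUnit] at hs hx
  have hb : b = 0 := by
    have : b * r⁻¹ = 0 := by linarith
    simpa [hr.ne'] using this
  subst hb
  have hx : x * r⁻¹ = 0 := by linarith
  exact ⟨rfl, by simpa [hr.ne'] using hx⟩

theorem ssrMul_comm_of_central_form {g : SSR}
    (hx : g.2.1 = 0) (hy : g.2.2.1 = 0) (hb : g.2.2.2.1 = 0) (hr : (g.2.2.2.2 : ℝ) = 1)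
    (h : SSR) : ssrMul g h = ssrMul h g := by
  obtain ⟨s, x, y, b, r, hr_pos⟩ := g
  obtain ⟨s', x', y', b', r', hr'_pos⟩ := h
  simp only at hx hy hb hr
  subst hx hy hb hr
  refine Prod.ext ?_ (Prod.ext ?_ (Prod.ext ?_ (Prod.ext ?_ (Subtype.ext ?_)))) <;>
    simp only [ssrMul] <;> ring

end SSR

/-- The centre of the SSR group is Z = {(s,0,0,0,1) : s ∈ ℝ}. -/
theorem ssr_center :
    {g : SSR | ∀ h : SSR, ssrMul g h = ssrMul h g} =
      {g : SSR | g.2.1 = 0 ∧ g.2.2.1 = 0 ∧ g.2.2.2.1 = 0 ∧ (g.2.2.2.2 : ℝ) = 1} := by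
  ext g
  constructor
  · intro hg
    obtain ⟨hr, hy⟩ := SSR.r_eq_one_and_y_eq_zero_of_commute_bUnit (hg SSR.bUnit)
    obtain ⟨hb, hx⟩ := SSR.b_eq_zero_and_x_eq_zero_of_commute_yUnit (hg SSR.yUnit)
    exact ⟨hx, hy, hb, hr⟩
  · rintro ⟨hx, hy, hb, hr⟩
    exact SSR.ssrMul_comm_of_central_form hx hy hb hr
end
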